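/- arXiv:2508.21178 — 4 statements merged into one kernel-verified Lean document; each statement's English description precedes it below -/
import Mathlib

section
/- Let n ≥ 2. For each j ∈ {1,…,n} and a, x ∈ {0,1}, let ρ^{(j)}_{a|x} be a 2×2 density matrix and set A^{(j)}_x = ρ^{(j)}_{0|x} − ρ^{(j)}_{1|x}. Then for every bit string s ∈ {0,1}^n, the Hermitian matrix W_s satisfies W_s ≤ 2√2(n−1)·I_{2^n} in the Loewner order; equivalently, every eigenvalue of W_s is at most 2√2(n−1). -/
open Matrix Finset ComplexOrder

noncomputable section

/-- 2×2 complex matrices. -/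
abbrev Mat2 := Matrix (Fin 2) (Fin 2) ℂ

/-- Tensor product of `n` 2×2 matrices, indexed by bit strings `Fin n → Fin 2`. -/
def tensorN (n : ℕ) (M : Fin n → Mat2) :
    Matrix (Fin n → Fin 2) (Fin n → Fin 2) ℂ :=
  Matrix.of fun f g => ∏ j, M j (f j) (g j)

set_option linter.unusedSectionVars false
set_option linter.unusedTactic false

section Helpers

open scoped MatrixOrder

variable {n : ℕ}

lemma tensorN_mul (M M' : Fin n → Mat2) :
    tensorN n M * tensorN n M' = tensorN n fun j => M j * M' j := by
  ext f g
  simp only [tensorN, Matrix.mul_apply, Matrix.of_apply]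
  calc ∑ h : Fin n → Fin 2, (∏ j, M j (f j) (h j)) * ∏ j, M' j (h j) (g j)
      = ∑ h : Fin n → Fin 2, ∏ j, (M j (f j) (h j) * M' j (h j) (g j)) := by
        simp_rw [Finset.prod_mul_distrib]
    _ = ∏ j, ∑ b : Fin 2, M j (f j) b * M' j b (g j) := by
        rw [Finset.prod_univ_sum, Fintype.piFinset_univ]

lemma tensorN_conjTranspose (M : Fin n → Mat2) :
    (tensorN n M)ᴴ = tensorN n fun j => (M j)ᴴ := by
  ext f g
  simp [tensorN, Matrix.conjTranspose_apply, star_prod]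

lemma tensorN_one : tensorN n (fun _ => (1 : Mat2)) = 1 := by
  ext f g
  by_cases h : f = g
  · subst h
    simp [tensorN, Matrix.one_apply_eq]
  · obtain ⟨j, hj⟩ := Function.ne_iff.mp h
    rw [Matrix.one_apply_ne h]
    exact Finset.prod_eq_zero (Finset.mem_univ j) (Matrix.one_apply_ne hj)

lemma tensorN_posSemidef (M : Fin n → Mat2) (h : ∀ j, (M j).PosSemidef) :
    (tensorN n M).PosSemidef := by
  have e : tensorN n M
      = (tensorN n (fun (j : Fin n) => CFC.sqrt (M j)))ᴴ * tensorN n (fun (j : Fin n) => CFC.sqrt (M j)) := by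
    have e2 : (fun (j : Fin n) => (CFC.sqrt (M j))ᴴ * CFC.sqrt (M j)) = M := funext fun j => by
      rw [(CFC.sqrt_nonneg (M j)).posSemidef.isHermitian.eq, CFC.sqrt_mul_sqrt_self (M j) (h j).nonneg]
    rw [tensorN_conjTranspose, tensorN_mul, e2]
  rw [e]
  exact Matrix.posSemidef_conjTranspose_mul_self _

lemma tensorN_if_apply (j : Fin n) (M : Fin n → Mat2) (X : Mat2) (f g : Fin n → Fin 2) :
    tensorN n (fun k => if k = j then X else M k) f g
      = X (f j) (g j) * ∏ k ∈ Finset.univ.erase j, M k (f k) (g k) := by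
  show (∏ k, (if k = j then X else M k) (f k) (g k)) = _
  rw [← Finset.mul_prod_erase Finset.univ _ (Finset.mem_univ j), if_pos rfl]
  congr 1
  exact Finset.prod_congr rfl fun k hk => by rw [if_neg (Finset.ne_of_mem_erase hk)]

lemma tensorN_if_add (j : Fin n) (M : Fin n → Mat2) (X Y : Mat2) :
    tensorN n (fun k => if k = j then X + Y else M k)
      = tensorN n (fun k => if k = j then X else M k)
        + tensorN n (fun k => if k = j then Y else M k) := by
  ext f g
  simp only [Matrix.add_apply, tensorN_if_apply, add_mul]

lemma tensorN_if_sub (j : Fin n) (M : Fin n → Mat2) (X Y : Mat2) :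
    tensorN n (fun k => if k = j then X - Y else M k)
      = tensorN n (fun k => if k = j then X else M k)
        - tensorN n (fun k => if k = j then Y else M k) := by
  ext f g
  simp only [Matrix.sub_apply, tensorN_if_apply, sub_mul]

lemma tensorN_if_smul (j : Fin n) (M : Fin n → Mat2) (c : ℂ) (X : Mat2) :
    tensorN n (fun k => if k = j then c • X else M k)
      = c • tensorN n (fun k => if k = j then X else M k) := by
  ext f g
  simp only [Matrix.smul_apply, tensorN_if_apply, smul_eq_mul, mul_assoc]
set_option linter.unusedSectionVars false

variable {N : Type*} [Fintype N] [DecidableEq N]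

lemma psd_ofReal_smul {M : Matrix N N ℂ} (hM : M.PosSemidef) {r : ℝ} (hr : 0 ≤ r) :
    (((r : ℂ)) • M).PosSemidef := by
  constructor
  · have : ((r : ℂ) • M)ᴴ = star (r : ℂ) • Mᴴ := Matrix.conjTranspose_smul _ _
    rw [Matrix.IsHermitian, this, Complex.star_def, Complex.conj_ofReal, hM.isHermitian.eq]
  · intro x
    exact (hM.smul (by exact_mod_cast hr : (0:ℂ) ≤ r)).2 x

lemma psd_sum {ι : Type*} (t : Finset ι) (F : ι → Matrix N N ℂ)
    (h : ∀ i ∈ t, (F i).PosSemidef) : (∑ i ∈ t, F i).PosSemidef := by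
  classical
  induction t using Finset.induction_on with
  | empty => simpa using Matrix.PosSemidef.zero
  | insert _ _ hx ih =>
    rw [Finset.sum_insert hx]
    exact ((h _ (Finset.mem_insert_self _ _)).add
      (ih fun i hi => h i (Finset.mem_insert_of_mem hi)))

lemma psd_one_sub_of_trace_one {ρ : Matrix N N ℂ} (hρ : ρ.PosSemidef)
    (ht : ρ.trace = 1) : ((1 : Matrix N N ℂ) - ρ).PosSemidef := by
  have hH := hρ.isHermitian
  have hUU : (hH.eigenvectorUnitary : Matrix N N ℂ) * star (hH.eigenvectorUnitary : Matrix N N ℂ) = 1 :=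
    (Matrix.mem_unitaryGroup_iff).mp (Matrix.IsHermitian.eigenvectorUnitary hH).2
  have hUU' : star (hH.eigenvectorUnitary : Matrix N N ℂ) * (hH.eigenvectorUnitary : Matrix N N ℂ) = 1 :=
    (Matrix.mem_unitaryGroup_iff').mp (Matrix.IsHermitian.eigenvectorUnitary hH).2
  have hspec := hH.spectral_theorem
  simp only [Unitary.conjStarAlgAut_apply, Unitary.coe_star] at hspec
  have hsum : ∑ i, hH.eigenvalues i = 1 := by
    have h2 : ρ.trace = ∑ i, (hH.eigenvalues i : ℂ) := by
      conv_lhs => rw [hspec]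
      rw [Matrix.trace_mul_cycle, hUU', one_mul, Matrix.trace_diagonal]
      simp [Function.comp]
    rw [ht] at h2
    exact_mod_cast h2.symm
  have hle : ∀ i, hH.eigenvalues i ≤ 1 := fun i => by
    rw [← hsum]
    exact Finset.single_le_sum (fun j _ => hρ.eigenvalues_nonneg j) (Finset.mem_univ i)
  have hd : Matrix.diagonal (fun i => (1 : ℂ) - (hH.eigenvalues i : ℂ))
      = 1 - Matrix.diagonal (RCLike.ofReal ∘ hH.eigenvalues) := by
    rw [← Matrix.diagonal_one, ← Matrix.diagonal_sub]
    rfl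
  have key : (1 : Matrix N N ℂ) - ρ
      = (hH.eigenvectorUnitary : Matrix N N ℂ)
        * Matrix.diagonal (fun i => (1 : ℂ) - (hH.eigenvalues i : ℂ))
        * (hH.eigenvectorUnitary : Matrix N N ℂ)ᴴ := by
    rw [← Matrix.star_eq_conjTranspose, hd, Matrix.mul_sub, Matrix.sub_mul, mul_one, hUU]
    rw [← hspec]
  rw [key]
  refine Matrix.PosSemidef.mul_mul_conjTranspose_same ?_ _
  refine Matrix.posSemidef_diagonal_iff.mpr fun i => ?_
  have h0 : (0:ℝ) ≤ 1 - hH.eigenvalues i := by linarith [hle i]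
  calc (0 : ℂ) ≤ ((1 - hH.eigenvalues i : ℝ) : ℂ) := by exact_mod_cast h0
    _ = 1 - (hH.eigenvalues i : ℂ) := by push_cast; ring

lemma psd_one_sub_sq {A : Matrix N N ℂ}
    (h1 : ((1 : Matrix N N ℂ) - A).PosSemidef)
    (h2 : ((1 : Matrix N N ℂ) + A).PosSemidef) :
    ((1 : Matrix N N ℂ) - A * A).PosSemidef := by
  have hs := CFC.sqrt_mul_sqrt_self (1 - A) h1.nonneg
  have hcommS : CFC.sqrt (1 - A) * (1 - A) = (1 - A) * CFC.sqrt (1 - A) := by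
    have h3 := mul_assoc (CFC.sqrt (1 - A)) (CFC.sqrt (1 - A)) (CFC.sqrt (1 - A))
    rw [hs] at h3
    exact h3.symm
  have hcomm : CFC.sqrt (1 - A) * (1 + A) = (1 + A) * CFC.sqrt (1 - A) := by
    have e : (1 : Matrix N N ℂ) + A = (1 + 1) - (1 - A) := by noncomm_ring
    rw [e, mul_sub, sub_mul, hcommS, mul_add, add_mul, mul_one, one_mul]
  have key : (1 : Matrix N N ℂ) - A * A = CFC.sqrt (1 - A) * (1 + A) * (CFC.sqrt (1 - A))ᴴ := by
    rw [(CFC.sqrt_nonneg (1 - A)).posSemidef.isHermitian.eq]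
    symm
    calc CFC.sqrt (1 - A) * (1 + A) * CFC.sqrt (1 - A) = (1 + A) * (CFC.sqrt (1 - A) * CFC.sqrt (1 - A)) := by
          rw [hcomm, mul_assoc]
      _ = (1 + A) * (1 - A) := by rw [hs]
      _ = 1 - A * A := by noncomm_ring
  rw [key]
  exact h2.mul_mul_conjTranspose_same (CFC.sqrt (1 - A))

lemma key_sq (X Y : Matrix N N ℂ) (hX : Xᴴ = X) (hY : Yᴴ = Y)
    (hc : X * Y = Y * X) (ε : ℂ) (hε : ε = 1 ∨ ε = -1)
    (a b : ℝ) (hab : a * b = 1) :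
    (((a ^ 2 : ℝ) : ℂ) • (X * X) + ((b ^ 2 : ℝ) : ℂ) • (Y * Y)
      - (2 * ε) • (X * Y)).PosSemidef := by
  have h := Matrix.posSemidef_conjTranspose_mul_self ((a : ℂ) • X - ((ε * b) : ℂ) • Y)
  have hstar : ((a : ℂ) • X - (ε * b : ℂ) • Y)ᴴ = (a : ℂ) • X - (ε * b : ℂ) • Y := by
    rw [Matrix.conjTranspose_sub, Matrix.conjTranspose_smul, Matrix.conjTranspose_smul, hX, hY]
    rcases hε with rfl | rfl <;>
      simp [Complex.star_def, Complex.conj_ofReal]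
  rw [hstar] at h
  have hab' : (a : ℂ) * (b : ℂ) = 1 := by exact_mod_cast hab
  convert h using 1
  simp only [Matrix.sub_mul, Matrix.mul_sub, smul_mul_assoc, mul_smul_comm, smul_smul]
  rw [hc]
  rcases hε with rfl | rfl <;>
    match_scalars <;> push_cast <;>
      first
      | ring1
      | linear_combination 2 * hab'
      | linear_combination (-2) * hab'
-- telescoping + tsl, to be appended after t1 content
variable {n : ℕ}

/-- single-slot tensor -/
def tsl (j : Fin n) (X : Mat2) : Matrix (Fin n → Fin 2) (Fin n → Fin 2) ℂ :=
  tensorN n (fun k => if k = j then X else 1)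

lemma tsl_herm (j : Fin n) (X : Mat2) (hX : Xᴴ = X) : (tsl j X)ᴴ = tsl j X := by
  rw [tsl, tensorN_conjTranspose]
  exact congrArg (tensorN n) (funext fun k => by by_cases hk : k = j <;> simp [hk, hX])

lemma tsl_one (j : Fin n) : tsl j (1 : Mat2) = 1 := by
  rw [tsl, show (fun k => if k = j then (1:Mat2) else 1) = fun _ => (1:Mat2) from
    funext fun k => by split <;> rfl]
  exact tensorN_one

lemma tsl_mul (j : Fin n) (X Y : Mat2) : tsl j X * tsl j Y = tsl j (X * Y) := by
  rw [tsl, tsl, tsl, tensorN_mul]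
  exact congrArg (tensorN n) (funext fun k => by by_cases hk : k = j <;> simp [hk])

lemma tsl_psd (j : Fin n) (X : Mat2) (hX : X.PosSemidef) : (tsl j X).PosSemidef := by
  refine tensorN_posSemidef _ fun k => ?_
  by_cases hk : k = j <;> simp [hk, hX, Matrix.PosSemidef.one]

lemma psd_one_sub_tensorN (C : Fin n → Mat2) (h1 : ∀ k, (C k).PosSemidef)
    (h2 : ∀ k, ((1 : Mat2) - C k).PosSemidef) :
    ((1 : Matrix (Fin n → Fin 2) (Fin n → Fin 2) ℂ) - tensorN n C).PosSemidef := by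
  have htel : (1 : Matrix (Fin n → Fin 2) (Fin n → Fin 2) ℂ) - tensorN n C
      = ∑ m ∈ Finset.range n,
          (tensorN n (fun k => if (k : ℕ) < m then C k else 1)
            - tensorN n (fun k => if (k : ℕ) < m + 1 then C k else 1)) := by
    rw [Finset.sum_range_sub' (fun m => tensorN n (fun k => if (k : ℕ) < m then C k else 1))]
    congr 1
    · rw [show (fun k : Fin n => if (k:ℕ) < 0 then C k else 1) = fun _ => (1:Mat2) from
        funext fun k => by simp]
      exact tensorN_one.symm
    · exact congrArg (tensorN n) (funext fun k => (if_pos k.isLt).symm)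
  rw [htel]
  refine psd_sum _ _ fun m hm => ?_
  have hmn : m < n := Finset.mem_range.mp hm
  set j : Fin n := ⟨m, hmn⟩ with hj
  have e1 : (fun k : Fin n => if (k:ℕ) < m then C k else 1)
      = fun k => if k = j then (1 : Mat2) else (if (k:ℕ) < m then C k else 1) := by
    funext k
    by_cases hk : k = j
    · subst hk; simp [hj]
    · rw [if_neg hk]
  have e2 : (fun k : Fin n => if (k:ℕ) < m + 1 then C k else 1)
      = fun k => if k = j then C j else (if (k:ℕ) < m then C k else 1) := by
    funext k
    by_cases hk : k = j
    · subst hk; simp [hj]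
    · rw [if_neg hk]
      have hkm : (k : ℕ) ≠ m := fun h => hk (Fin.ext (by simp [hj, h]))
      by_cases hlt : (k:ℕ) < m
      · rw [if_pos hlt, if_pos (by omega)]
      · rw [if_neg hlt, if_neg (by omega)]
  rw [e1, e2, ← tensorN_if_sub]
  refine tensorN_posSemidef _ fun k => ?_
  by_cases hk : k = j
  · rw [if_pos hk]
    exact h2 j
  · rw [if_neg hk]
    by_cases hlt : (k:ℕ) < m
    · rw [if_pos hlt]; exact h1 k
    · rw [if_neg hlt]; exact Matrix.PosSemidef.one

lemma tsl_addX (j : Fin n) (X Y : Mat2) : tsl j (X + Y) = tsl j X + tsl j Y :=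
  tensorN_if_add j (fun _ => 1) X Y

lemma tsl_subX (j : Fin n) (X Y : Mat2) : tsl j (X - Y) = tsl j X - tsl j Y :=
  tensorN_if_sub j (fun _ => 1) X Y

lemma tsl_smulX (j : Fin n) (c : ℂ) (X : Mat2) : tsl j (c • X) = c • tsl j X :=
  tensorN_if_smul j (fun _ => 1) c X

end Helpers


/-- The operator `W_s` built from the observables `A^{(j)}_x`. -/
def Wop (n : ℕ) [NeZero n] (A : Fin n → Fin 2 → Mat2) (s : Fin n → Fin 2) :
    Matrix (Fin n → Fin 2) (Fin n → Fin 2) ℂ :=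
  (((n : ℂ) - 1) * (-1 : ℂ) ^ ((s 0 : ℕ))) •
      tensorN n (fun j => if j = 0 then A 0 0 + A 0 1 else A j 0)
    + ∑ j ∈ Finset.univ.filter (fun j : Fin n => j ≠ 0),
        ((-1 : ℂ) ^ ((s j : ℕ))) •
          tensorN n (fun k => if k = 0 then A 0 0 - A 0 1
            else if k = j then A j 1 else 1)

/-- for arbitrary qubit density-matrix preparations, every
`W_s` satisfies `W_s ≤ 2√2 (n-1) · I` in the Loewner order. -/
theorem stmt1 (n : ℕ) [NeZero n] (hn : 2 ≤ n)
    (ρ : Fin n → Fin 2 → Fin 2 → Mat2)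
    (hρpsd : ∀ j a x, (ρ j a x).PosSemidef)
    (hρtr : ∀ j a x, (ρ j a x).trace = 1)
    (A : Fin n → Fin 2 → Mat2)
    (hA : ∀ j x, A j x = ρ j 0 x - ρ j 1 x)
    (s : Fin n → Fin 2) :
    (((2 * Real.sqrt 2 * ((n : ℝ) - 1) : ℝ) : ℂ) •
        (1 : Matrix (Fin n → Fin 2) (Fin n → Fin 2) ℂ)
      - Wop n A s).PosSemidef := by
  classical
  -- basic facts about the observables
  have hAH : ∀ j x, (A j x)ᴴ = A j x := fun j x => by
    rw [hA j x, Matrix.conjTranspose_sub, (hρpsd j 0 x).isHermitian.eq,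
      (hρpsd j 1 x).isHermitian.eq]
  have hρle : ∀ j a x, ((1 : Mat2) - ρ j a x).PosSemidef := fun j a x =>
    psd_one_sub_of_trace_one (hρpsd j a x) (hρtr j a x)
  have hsq : ∀ j x, ((1 : Mat2) - A j x * A j x).PosSemidef := fun j x => by
    refine psd_one_sub_sq ?_ ?_
    · have e : (1 : Mat2) - A j x = ((1 : Mat2) - ρ j 0 x) + ρ j 1 x := by
        rw [hA j x]; abel
      rw [e]; exact (hρle j 0 x).add (hρpsd j 1 x)
    · have e : (1 : Mat2) + A j x = ((1 : Mat2) - ρ j 1 x) + ρ j 0 x := by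
        rw [hA j x]; abel
      rw [e]; exact (hρle j 1 x).add (hρpsd j 0 x)
  -- abbreviations
  set Pt : Matrix (Fin n → Fin 2) (Fin n → Fin 2) ℂ := tsl (0 : Fin n) (A 0 0 + A 0 1) with hPt
  set Mt : Matrix (Fin n → Fin 2) (Fin n → Fin 2) ℂ := tsl (0 : Fin n) (A 0 0 - A 0 1) with hMt
  set Qt : Matrix (Fin n → Fin 2) (Fin n → Fin 2) ℂ :=
    tensorN n (fun k => if k = (0 : Fin n) then 1 else A k 0) with hQt
  set Rt : Fin n → Matrix (Fin n → Fin 2) (Fin n → Fin 2) ℂ := fun j => tsl j (A j 1) with hRt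
  set ε : Fin n → ℂ := fun j => (-1 : ℂ) ^ ((s j : ℕ)) with hε
  have hεpm : ∀ j, ε j = 1 ∨ ε j = -1 := fun j => by
    have h2 : (s j : ℕ) = 0 ∨ (s j : ℕ) = 1 := by omega
    rcases h2 with h2 | h2 <;> [left; right] <;> simp [hε, h2]
  -- Hermitian properties
  have hPtH : Ptᴴ = Pt := by
    rw [hPt]
    exact tsl_herm _ _ (by rw [Matrix.conjTranspose_add, hAH, hAH])
  have hMtH : Mtᴴ = Mt := by
    rw [hMt]
    exact tsl_herm _ _ (by rw [Matrix.conjTranspose_sub, hAH, hAH])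
  have hQtH : Qtᴴ = Qt := by
    rw [hQt, tensorN_conjTranspose]
    exact congrArg (tensorN n) (funext fun k => by
      by_cases hk : k = 0 <;> simp [hk, hAH])
  have hRtH : ∀ j, (Rt j)ᴴ = Rt j := fun j => by
    rw [hRt]
    exact tsl_herm _ _ (hAH j 1)
  -- products and squares
  have hPQc : Pt * Qt = Qt * Pt := by
    rw [hPt, hQt]
    unfold tsl
    rw [tensorN_mul, tensorN_mul]
    exact congrArg (tensorN n) (funext fun k => by by_cases hk : k = 0 <;> simp [hk])
  have hMRc : ∀ j, j ≠ 0 → Mt * Rt j = Rt j * Mt := fun j hj => by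
    rw [hMt, hRt]
    unfold tsl
    rw [tensorN_mul, tensorN_mul]
    refine congrArg (tensorN n) (funext fun k => ?_)
    by_cases hk : k = 0
    · subst hk; simp [Ne.symm hj]
    · by_cases hk2 : k = j <;> simp [hk, hk2, hj]
  have hPt2 : Pt * Pt = tsl (0 : Fin n) ((A 0 0 + A 0 1) * (A 0 0 + A 0 1)) := by
    rw [hPt, tsl_mul]
  have hMt2 : Mt * Mt = tsl (0 : Fin n) ((A 0 0 - A 0 1) * (A 0 0 - A 0 1)) := by
    rw [hMt, tsl_mul]
  have hRt2 : ∀ j, Rt j * Rt j = tsl j (A j 1 * A j 1) := fun j => by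
    rw [hRt, tsl_mul]
  have hQt2 : Qt * Qt = tensorN n (fun k => if k = (0 : Fin n) then 1 else A k 0 * A k 0) := by
    rw [hQt, tensorN_mul]
    exact congrArg (tensorN n) (funext fun k => by by_cases hk : k = 0 <;> simp [hk])
  -- representation of Wop
  have hPQ : tensorN n (fun j => if j = (0 : Fin n) then A 0 0 + A 0 1 else A j 0)
      = Pt * Qt := by
    rw [hPt, hQt]
    unfold tsl
    rw [tensorN_mul]
    exact congrArg (tensorN n) (funext fun k => by by_cases hk : k = 0 <;> simp [hk])
  have hMR : ∀ j : Fin n, j ≠ 0 →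
      tensorN n (fun k => if k = (0 : Fin n) then A 0 0 - A 0 1
        else if k = j then A j 1 else 1) = Mt * Rt j := fun j hj => by
    rw [hMt, hRt]
    unfold tsl
    rw [tensorN_mul]
    refine congrArg (tensorN n) (funext fun k => ?_)
    by_cases hk : k = 0
    · subst hk; simp [Ne.symm hj]
    · by_cases hk2 : k = j <;> simp [hk, hk2, hj]
  have hW : Wop n A s = (((n : ℂ) - 1) * ε 0) • (Pt * Qt)
      + ∑ j ∈ Finset.univ.filter (fun j : Fin n => j ≠ 0), ε j • (Mt * Rt j) := by
    unfold Wop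
    rw [hPQ]
    congr 1
    refine Finset.sum_congr rfl fun j hj => ?_
    rw [hMR j (Finset.mem_filter.mp hj).2]
  -- scalar facts
  have hs2 : (0:ℝ) ≤ Real.sqrt 2 := Real.sqrt_nonneg 2
  have hν : (0:ℝ) ≤ (n:ℝ) - 1 := by
    have h2 : (2:ℝ) ≤ (n:ℝ) := by exact_mod_cast hn
    linarith
  have hαβ : (Real.sqrt 2 / 2) * Real.sqrt 2 = 1 := by
    rw [div_mul_eq_mul_div, Real.mul_self_sqrt (by norm_num : (0:ℝ) ≤ 2)]
    norm_num
  have hab : Real.sqrt (Real.sqrt 2 / 2) * Real.sqrt (Real.sqrt 2) = 1 := by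
    rw [← Real.sqrt_mul (by positivity), hαβ, Real.sqrt_one]
  have ha2 : Real.sqrt (Real.sqrt 2 / 2) ^ 2 = Real.sqrt 2 / 2 := Real.sq_sqrt (by positivity)
  have hb2 : Real.sqrt (Real.sqrt 2) ^ 2 = Real.sqrt 2 := Real.sq_sqrt (by positivity)
  -- the square-completion matrices
  have hK0 : (((Real.sqrt 2 / 2 : ℝ) : ℂ) • (Pt * Pt) + ((Real.sqrt 2 : ℝ) : ℂ) • (Qt * Qt)
      - (2 * ε 0) • (Pt * Qt)).PosSemidef := by
    have h := key_sq Pt Qt hPtH hQtH hPQc (ε 0) (hεpm 0) _ _ hab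
    rwa [ha2, hb2] at h
  have hKj : ∀ j : Fin n, j ≠ 0 → (((Real.sqrt 2 / 2 : ℝ) : ℂ) • (Mt * Mt)
      + ((Real.sqrt 2 : ℝ) : ℂ) • (Rt j * Rt j) - (2 * ε j) • (Mt * Rt j)).PosSemidef := by
    intro j hj
    have h := key_sq Mt (Rt j) hMtH (hRtH j) (hMRc j hj) (ε j) (hεpm j) _ _ hab
    rwa [ha2, hb2] at h
  -- the 2x2 bound  4•1 ≥ P² + M²
  have h2x2 : (((4:ℝ):ℂ) • (1 : Mat2)
      - ((A 0 0 + A 0 1) * (A 0 0 + A 0 1) + (A 0 0 - A 0 1) * (A 0 0 - A 0 1))).PosSemidef := by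
    have e1 : (A 0 0 + A 0 1) * (A 0 0 + A 0 1) + (A 0 0 - A 0 1) * (A 0 0 - A 0 1)
        = (A 0 0 * A 0 0 + A 0 0 * A 0 0) + (A 0 1 * A 0 1 + A 0 1 * A 0 1) := by
      noncomm_ring
    have e2 : ((4:ℝ):ℂ) • (1 : Mat2)
        - ((A 0 0 * A 0 0 + A 0 0 * A 0 0) + (A 0 1 * A 0 1 + A 0 1 * A 0 1))
        = ((1 - A 0 0 * A 0 0) + (1 - A 0 0 * A 0 0))
          + ((1 - A 0 1 * A 0 1) + (1 - A 0 1 * A 0 1)) := by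
      match_scalars <;> push_cast <;> ring1
    rw [e1, e2]
    exact ((hsq 0 0).add (hsq 0 0)).add ((hsq 0 1).add (hsq 0 1))
  have hE : (((4:ℝ):ℂ) • (1 : Matrix (Fin n → Fin 2) (Fin n → Fin 2) ℂ)
      - (Pt * Pt + Mt * Mt)).PosSemidef := by
    have e : ((4:ℝ):ℂ) • (1 : Matrix (Fin n → Fin 2) (Fin n → Fin 2) ℂ) - (Pt * Pt + Mt * Mt)
        = tsl (0 : Fin n) (((4:ℝ):ℂ) • (1 : Mat2)
            - ((A 0 0 + A 0 1) * (A 0 0 + A 0 1) + (A 0 0 - A 0 1) * (A 0 0 - A 0 1))) := by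
      rw [hPt2, hMt2, tsl_subX, tsl_addX, tsl_smulX, tsl_one]
    rw [e]
    exact tsl_psd _ _ h2x2
  have hFQ : ((1 : Matrix (Fin n → Fin 2) (Fin n → Fin 2) ℂ) - Qt * Qt).PosSemidef := by
    rw [hQt2]
    refine psd_one_sub_tensorN _ (fun k => ?_) (fun k => ?_)
    · by_cases hk : k = 0
      · rw [if_pos hk]; exact Matrix.PosSemidef.one
      · rw [if_neg hk]
        have e : A k 0 * A k 0 = (A k 0)ᴴ * A k 0 := by rw [hAH]
        rw [e]; exact Matrix.posSemidef_conjTranspose_mul_self _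
    · by_cases hk : k = 0
      · rw [if_pos hk, sub_self]; exact Matrix.PosSemidef.zero
      · rw [if_neg hk]; exact hsq k 0
  have hFR : ∀ j : Fin n,
      ((1 : Matrix (Fin n → Fin 2) (Fin n → Fin 2) ℂ) - Rt j * Rt j).PosSemidef := by
    intro j
    rw [hRt2 j]
    unfold tsl
    refine psd_one_sub_tensorN _ (fun k => ?_) (fun k => ?_)
    · by_cases hk : k = j
      · rw [if_pos hk]
        have e : A j 1 * A j 1 = (A j 1)ᴴ * A j 1 := by rw [hAH]
        rw [e]; exact Matrix.posSemidef_conjTranspose_mul_self _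
      · rw [if_neg hk]; exact Matrix.PosSemidef.one
    · by_cases hk : k = j
      · rw [if_pos hk]; exact hsq j 1
      · rw [if_neg hk, sub_self]; exact Matrix.PosSemidef.zero
  have hcard : (Finset.univ.filter (fun j : Fin n => j ≠ 0)).card = n - 1 := by
    rw [Finset.filter_ne', Finset.card_erase_of_mem (Finset.mem_univ _), Finset.card_univ,
      Fintype.card_fin]
  -- per-j simplification of the summands
  have hperj : ∀ j ∈ Finset.univ.filter (fun j : Fin n => j ≠ 0),
      (((1/2 : ℝ) : ℂ)) • (((Real.sqrt 2 / 2 : ℝ) : ℂ) • (Mt * Mt)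
          + ((Real.sqrt 2 : ℝ) : ℂ) • (Rt j * Rt j) - (2 * ε j) • (Mt * Rt j))
        + (((Real.sqrt 2 / 2 : ℝ) : ℂ)) •
            ((1 : Matrix (Fin n → Fin 2) (Fin n → Fin 2) ℂ) - Rt j * Rt j)
      = ((((Real.sqrt 2 / 4 : ℝ) : ℂ)) • (Mt * Mt)
          + (((Real.sqrt 2 / 2 : ℝ) : ℂ)) • (1 : Matrix (Fin n → Fin 2) (Fin n → Fin 2) ℂ))
        - ε j • (Mt * Rt j) := by
    intro j _
    match_scalars <;> push_cast <;> ring1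
  have hsum2 : ∑ j ∈ Finset.univ.filter (fun j : Fin n => j ≠ 0),
      ((((1/2 : ℝ) : ℂ)) • (((Real.sqrt 2 / 2 : ℝ) : ℂ) • (Mt * Mt)
          + ((Real.sqrt 2 : ℝ) : ℂ) • (Rt j * Rt j) - (2 * ε j) • (Mt * Rt j))
        + (((Real.sqrt 2 / 2 : ℝ) : ℂ)) •
            ((1 : Matrix (Fin n → Fin 2) (Fin n → Fin 2) ℂ) - Rt j * Rt j))
      = ((n : ℂ) - 1) • ((((Real.sqrt 2 / 4 : ℝ) : ℂ)) • (Mt * Mt)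
          + (((Real.sqrt 2 / 2 : ℝ) : ℂ)) • (1 : Matrix (Fin n → Fin 2) (Fin n → Fin 2) ℂ))
        - ∑ j ∈ Finset.univ.filter (fun j : Fin n => j ≠ 0), ε j • (Mt * Rt j) := by
    rw [Finset.sum_congr rfl hperj, Finset.sum_sub_distrib, Finset.sum_const, hcard]
    congr 1
    rw [← Nat.cast_smul_eq_nsmul ℂ]
    congr 1
    push_cast [Nat.cast_sub (by omega : 1 ≤ n)]
    ring
  -- the main algebraic identity
  have main : (((2 * Real.sqrt 2 * ((n : ℝ) - 1) : ℝ) : ℂ) •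
        (1 : Matrix (Fin n → Fin 2) (Fin n → Fin 2) ℂ) - Wop n A s)
      = (((((n:ℝ) - 1)/2 : ℝ) : ℂ)) •
          (((Real.sqrt 2 / 2 : ℝ) : ℂ) • (Pt * Pt) + ((Real.sqrt 2 : ℝ) : ℂ) • (Qt * Qt)
            - (2 * ε 0) • (Pt * Qt))
        + (((((n:ℝ) - 1) * (Real.sqrt 2 / 2) / 2 : ℝ) : ℂ)) •
            (((4:ℝ):ℂ) • (1 : Matrix (Fin n → Fin 2) (Fin n → Fin 2) ℂ) - (Pt * Pt + Mt * Mt))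
        + (((((n:ℝ) - 1) * Real.sqrt 2 / 2 : ℝ) : ℂ)) •
            ((1 : Matrix (Fin n → Fin 2) (Fin n → Fin 2) ℂ) - Qt * Qt)
        + ∑ j ∈ Finset.univ.filter (fun j : Fin n => j ≠ 0),
            ((((1/2 : ℝ) : ℂ)) • (((Real.sqrt 2 / 2 : ℝ) : ℂ) • (Mt * Mt)
                + ((Real.sqrt 2 : ℝ) : ℂ) • (Rt j * Rt j) - (2 * ε j) • (Mt * Rt j))
              + (((Real.sqrt 2 / 2 : ℝ) : ℂ)) •
                  ((1 : Matrix (Fin n → Fin 2) (Fin n → Fin 2) ℂ) - Rt j * Rt j)) := by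
    rw [hW, hsum2]
    match_scalars <;> push_cast <;> ring1
  rw [main]
  refine (((psd_ofReal_smul hK0 (by positivity)).add
      (psd_ofReal_smul hE (by positivity))).add
      (psd_ofReal_smul hFQ (by positivity))).add
      (psd_sum _ _ fun j hj => (psd_ofReal_smul (hKj j (Finset.mem_filter.mp hj).2)
        (by norm_num)).add (psd_ofReal_smul (hFR j) (by positivity)))
end
end

section
/- Let A_0 and A_1 be traceless Hermitian 2×2 complex matrices with A_0² = A_1² = I_2. Then there exist a 2×2 unitary matrix U and an angle α ∈ [0, π/2] such that U A_x U† = cos α · σ_X + (−1)^x sin α · σ_Z for x ∈ {0,1}. -/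
open Matrix ComplexOrder

noncomputable section

/-- The Pauli matrix `σ_X`. -/
def σX : Mat2 := !![0, 1; 1, 0]

/-- The Pauli matrix `σ_Z`. -/
def σZ : Mat2 := !![1, 0; 0, -1]

/-! The matrices `A₀ - A₁` and `A₀ + A₁` anticommute because `A₀² = A₁²`. By the spectral
theorem each is a nonnegative multiple `c P`, `b Q` of a traceless Hermitian involution, and `P, Q`
can be chosen to anticommute (if one of `b, c` vanishes, the other matrix is paired with a partner).
Any anticommuting pair of Hermitian involutions is unitarily equivalent to `(σ_Z, σ_X)`:
diagonalise `P` to `σ_Z`; then `Q` is off-diagonal with a unimodular entry, which a diagonal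
unitary turns into `1`. Finally `A_x = ± (c / 2) P + (b / 2) Q` squares to `(b² + c²) / 4`, so
`(b, c) / 2` is a point `(cos α, sin α)` of the unit circle with `α ∈ [0, π / 2]`. -/

lemma isHermitian_σX : σX.IsHermitian := by
  ext i j; fin_cases i <;> fin_cases j <;> simp [σX]

lemma isHermitian_σZ : σZ.IsHermitian := by
  ext i j; fin_cases i <;> fin_cases j <;> simp [σZ]

lemma σX_mul_σX : σX * σX = 1 := by
  simp [σX, one_fin_two]

lemma σZ_mul_σZ : σZ * σZ = 1 := by
  simp [σZ, one_fin_two]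

lemma σZ_mul_σX : σZ * σX = -(σX * σZ) := by
  simp [σX, σZ]

lemma sub_mul_add_eq_neg_add_mul_sub {R : Type*} [Ring R] {a b : R} (h : a * a = b * b) :
    (a - b) * (a + b) = -((a + b) * (a - b)) := by
  simp only [sub_mul, mul_add, add_mul, mul_sub, h]
  abel

lemma Real.exists_mem_Icc_cos_eq_sin_eq {x y : ℝ} (hx : 0 ≤ x) (hy : 0 ≤ y)
    (h : x ^ 2 + y ^ 2 = 1) :
    ∃ α ∈ Set.Icc 0 (Real.pi / 2), Real.cos α = x ∧ Real.sin α = y := by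
  refine ⟨Real.arccos x, ⟨Real.arccos_nonneg x, Real.arccos_le_pi_div_two.mpr hx⟩,
    Real.cos_arccos (by nlinarith) (by nlinarith), ?_⟩
  rw [Real.sin_arccos, show 1 - x ^ 2 = y ^ 2 by linarith, Real.sqrt_sq hy]

lemma Matrix.IsHermitian.mem_unitaryGroup_of_mul_self {n 𝕜 : Type*} [Fintype n] [DecidableEq n]
    [RCLike 𝕜] {M : Matrix n n 𝕜} (hM : M.IsHermitian) (h : M * M = 1) :
    M ∈ unitaryGroup n 𝕜 := by
  rw [mem_unitaryGroup_iff', star_eq_conjTranspose, hM.eq, h]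

lemma Matrix.mul_mul_mul_conjTranspose_mul {n α : Type*} [Fintype n] [CommSemiring α] [StarRing α]
    (A B X : Matrix n n α) : A * B * X * (A * B)ᴴ = A * (B * X * Bᴴ) * Aᴴ := by
  simp only [conjTranspose_mul, mul_assoc]

structure IsPauliPair {n 𝕜 : Type*} [Fintype n] [DecidableEq n] [RCLike 𝕜]
    (P Q : Matrix n n 𝕜) : Prop where
  isHermitian_left : P.IsHermitian
  isHermitian_right : Q.IsHermitian
  mul_self_left : P * P = 1
  mul_self_right : Q * Q = 1
  anticomm : P * Q = -(Q * P)

namespace IsPauliPair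

variable {n 𝕜 : Type*} [Fintype n] [DecidableEq n] [RCLike 𝕜] {P Q : Matrix n n 𝕜}

lemma symm (h : IsPauliPair P Q) : IsPauliPair Q P :=
  ⟨h.isHermitian_right, h.isHermitian_left, h.mul_self_right, h.mul_self_left,
    by rw [h.anticomm, neg_neg]⟩

lemma conj (h : IsPauliPair P Q) {V : Matrix n n 𝕜} (hV : V ∈ unitaryGroup n 𝕜) :
    IsPauliPair (V * P * Vᴴ) (V * Q * Vᴴ) := by
  have hVV : Vᴴ * V = 1 := mem_unitaryGroup_iff'.mp hV
  have hVV' : V * Vᴴ = 1 := mem_unitaryGroup_iff.mp hV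
  have conj_mul (X Y : Matrix n n 𝕜) : V * X * Vᴴ * (V * Y * Vᴴ) = V * (X * Y) * Vᴴ := by
    calc V * X * Vᴴ * (V * Y * Vᴴ) = V * X * (Vᴴ * V) * Y * Vᴴ := by simp only [mul_assoc]
      _ = V * (X * Y) * Vᴴ := by rw [hVV, mul_one, mul_assoc V X]
  refine ⟨isHermitian_mul_mul_conjTranspose V h.isHermitian_left,
    isHermitian_mul_mul_conjTranspose V h.isHermitian_right, ?_, ?_, ?_⟩
  · rw [conj_mul, h.mul_self_left, mul_one, hVV']
  · rw [conj_mul, h.mul_self_right, mul_one, hVV']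
  · rw [conj_mul, conj_mul, h.anticomm, mul_neg, neg_mul]

lemma trace_left_eq_zero (h : IsPauliPair P Q) : P.trace = 0 := by
  have : P.trace = -P.trace := by
    calc P.trace = (P * Q * Q).trace := by rw [mul_assoc, h.mul_self_right, mul_one]
      _ = (Q * (P * Q)).trace := by rw [trace_mul_comm]
      _ = -P.trace := by
        rw [h.anticomm, mul_neg, ← mul_assoc, h.mul_self_right, one_mul, trace_neg]
  linear_combination this / 2

lemma smul_add_smul_mul_self (h : IsPauliPair P Q) (s t : 𝕜) :
    (s • P + t • Q) * (s • P + t • Q) = (s ^ 2 + t ^ 2) • (1 : Matrix n n 𝕜) := by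
  simp only [add_mul, mul_add, smul_mul_smul_comm, h.mul_self_left, h.mul_self_right, h.anticomm]
  module

end IsPauliPair

lemma isPauliPair_σZ_σX : IsPauliPair σZ σX :=
  ⟨isHermitian_σZ, isHermitian_σX, σZ_mul_σZ, σX_mul_σX, σZ_mul_σX⟩

lemma Matrix.IsHermitian.exists_unitary_conj_eq_smul_σZ {M : Mat2} (hM : M.IsHermitian)
    (htr : M.trace = 0) :
    ∃ V ∈ unitaryGroup (Fin 2) ℂ, ∃ r : ℝ, 0 ≤ r ∧ V * M * Vᴴ = (r : ℂ) • σZ := by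
  have he : hM.eigenvalues 1 = -hM.eigenvalues 0 := by
    have h := hM.trace_eq_sum_eigenvalues
    rw [htr, Fin.sum_univ_two, ← RCLike.ofReal_add, eq_comm, RCLike.ofReal_eq_zero] at h
    linarith
  obtain ⟨V, hV, hVM⟩ :
      ∃ V ∈ unitaryGroup (Fin 2) ℂ, V * M * Vᴴ = (hM.eigenvalues 0 : ℂ) • σZ := by
    refine ⟨_, (star hM.eigenvectorUnitary).2, ?_⟩
    have hdiag := hM.conjStarAlgAut_star_eigenvectorUnitary
    rw [Unitary.conjStarAlgAut_apply] at hdiag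
    rw [← star_eq_conjTranspose, hdiag]
    ext i j; fin_cases i <;> fin_cases j <;> simp [σZ, he]
  rcases le_total 0 (hM.eigenvalues 0) with he0 | he0
  · exact ⟨V, hV, hM.eigenvalues 0, he0, hVM⟩
  · refine ⟨σX * V, mul_mem (isHermitian_σX.mem_unitaryGroup_of_mul_self σX_mul_σX) hV,
      -hM.eigenvalues 0, neg_nonneg.mpr he0, ?_⟩
    rw [mul_mul_mul_conjTranspose_mul, hVM, isHermitian_σX.eq]
    ext i j; fin_cases i <;> fin_cases j <;> simp [σX, σZ]

lemma Matrix.IsHermitian.exists_nonneg_smul_isPauliPair {M : Mat2} (hM : M.IsHermitian)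
    (htr : M.trace = 0) :
    ∃ (r : ℝ) (P Q : Mat2), 0 ≤ r ∧ IsPauliPair P Q ∧ M = (r : ℂ) • P := by
  obtain ⟨V, hV, r, hr, hVM⟩ := hM.exists_unitary_conj_eq_smul_σZ htr
  refine ⟨r, _, _, hr, isPauliPair_σZ_σX.conj (Unitary.star_mem hV), ?_⟩
  have hVV : Vᴴ * V = 1 := mem_unitaryGroup_iff'.mp hV
  calc M = (Vᴴ * V) * M * (Vᴴ * V) := by rw [hVV, one_mul, mul_one]
    _ = Vᴴ * (V * M * Vᴴ) * V := by simp only [mul_assoc]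
    _ = (r : ℂ) • (Vᴴ * σZ * Vᴴᴴ) := by
        rw [hVM, conjTranspose_conjTranspose, Matrix.mul_smul, Matrix.smul_mul]

lemma IsPauliPair.exists_unitary_of_left_eq_σZ {Q : Mat2} (h : IsPauliPair σZ Q) :
    ∃ D ∈ unitaryGroup (Fin 2) ℂ, D * σZ * Dᴴ = σZ ∧ D * Q * Dᴴ = σX := by
  have hanti := congrFun₂ h.anticomm
  have h00 : Q 0 0 = 0 := by simpa [σZ, mul_apply, CharZero.eq_neg_self_iff] using hanti 0 0
  have h11 : Q 1 1 = 0 := by simpa [σZ, mul_apply, CharZero.neg_eq_self_iff] using hanti 1 1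
  have h10 : Q 1 0 = starRingEnd ℂ (Q 0 1) := (h.isHermitian_right.apply 1 0).symm
  have hw : Q 0 1 * starRingEnd ℂ (Q 0 1) = 1 := by
    have := congrFun₂ h.mul_self_right 0 0
    simpa [mul_apply, h00, h10] using this
  refine ⟨diagonal ![1, Q 0 1], ?_, ?_, ?_⟩
  · rw [mem_unitaryGroup_iff]
    ext i j; fin_cases i <;> fin_cases j <;> simp [hw]
  · ext i j; fin_cases i <;> fin_cases j <;> simp [σZ, hw]
  · rw [eta_fin_two Q]
    ext i j; fin_cases i <;> fin_cases j <;> simp [σX, h00, h11, h10, hw]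

lemma IsPauliPair.exists_unitary {P Q : Mat2} (h : IsPauliPair P Q) :
    ∃ V ∈ unitaryGroup (Fin 2) ℂ, V * P * Vᴴ = σZ ∧ V * Q * Vᴴ = σX := by
  obtain ⟨W, hW, r, hr, hWP⟩ :=
    h.isHermitian_left.exists_unitary_conj_eq_smul_σZ h.trace_left_eq_zero
  have hWh := h.conj hW
  obtain rfl : r = 1 := by
    have hsq := congrFun₂ hWh.mul_self_left 0 0
    rw [hWP, smul_mul_smul_comm, σZ_mul_σZ] at hsq
    have : r * r = 1 := by exact_mod_cast (by simpa using hsq : (r : ℂ) * r = 1)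
    nlinarith
  rw [Complex.ofReal_one, one_smul] at hWP
  obtain ⟨D, hD, hDZ, hDQ⟩ := (hWP ▸ hWh).exists_unitary_of_left_eq_σZ
  refine ⟨D * W, mul_mem hD hW, ?_, ?_⟩
  · rw [mul_mul_mul_conjTranspose_mul, hWP, hDZ]
  · rw [mul_mul_mul_conjTranspose_mul, hDQ]

lemma exists_isPauliPair_smul_smul {X Y : Mat2} (hX : X.IsHermitian) (hY : Y.IsHermitian)
    (hXt : X.trace = 0) (hYt : Y.trace = 0) (hXY : X * Y = -(Y * X)) :
    ∃ (x y : ℝ) (P Q : Mat2), 0 ≤ x ∧ 0 ≤ y ∧ IsPauliPair P Q ∧ X = (x : ℂ) • P ∧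
      Y = (y : ℂ) • Q := by
  obtain ⟨x, P, P', hx, hPP', rfl⟩ := hX.exists_nonneg_smul_isPauliPair hXt
  obtain ⟨y, Q, Q', hy, hQQ', rfl⟩ := hY.exists_nonneg_smul_isPauliPair hYt
  rcases hx.eq_or_lt with rfl | hx
  · exact ⟨0, y, Q', Q, le_rfl, hy, hQQ'.symm, by simp, rfl⟩
  rcases hy.eq_or_lt with rfl | hy
  · exact ⟨x, 0, P, P', hx.le, le_rfl, hPP', rfl, by simp⟩
  refine ⟨x, y, P, Q, hx.le, hy.le, ⟨hPP'.isHermitian_left,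
    hQQ'.isHermitian_left, hPP'.mul_self_left, hQQ'.mul_self_left, ?_⟩, rfl, rfl⟩
  have hxy : (x : ℂ) * y ≠ 0 := by exact_mod_cast (mul_pos hx hy).ne'
  rw [smul_mul_smul_comm, smul_mul_smul_comm, mul_comm (y : ℂ), ← smul_neg] at hXY
  exact smul_right_injective _ hxy hXY

/-- any pair of traceless Hermitian involutions `A_0, A_1` on `ℂ²`
is simultaneously unitarily equivalent to
`cos α σ_X + (−1)^x sin α σ_Z` for some `α ∈ [0, π/2]`. -/
theorem stmt8 (A : Fin 2 → Mat2)
    (hherm : ∀ x, (A x).IsHermitian)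
    (htraceless : ∀ x, (A x).trace = 0)
    (hsq : ∀ x, A x * A x = 1) :
    ∃ U : Mat2, U ∈ Matrix.unitaryGroup (Fin 2) ℂ ∧
      ∃ α : ℝ, α ∈ Set.Icc 0 (Real.pi / 2) ∧
        ∀ x : Fin 2, U * A x * Uᴴ
          = ((Real.cos α : ℝ) : ℂ) • σX
            + ((-1 : ℂ) ^ ((x : ℕ)) * ((Real.sin α : ℝ) : ℂ)) • σZ := by
  obtain ⟨c, b, P, Q, hc, hb, hPQ, hC, hB⟩ := exists_isPauliPair_smul_smul
    ((hherm 0).sub (hherm 1)) ((hherm 0).add (hherm 1))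
    (by rw [trace_sub, htraceless, htraceless, sub_zero])
    (by rw [trace_add, htraceless, htraceless, add_zero])
    (sub_mul_add_eq_neg_add_mul_sub ((hsq 0).trans (hsq 1).symm))
  have hA (x : Fin 2) :
      A x = ((-1 : ℂ) ^ (x : ℕ) * ((c / 2 : ℝ) : ℂ)) • P + ((b / 2 : ℝ) : ℂ) • Q := by
    have : A x = (2⁻¹ : ℂ) • ((-1 : ℂ) ^ (x : ℕ) • (A 0 - A 1) + (A 0 + A 1)) := by
      fin_cases x <;>
        simp only [Fin.zero_eta, Fin.mk_one, Fin.isValue, pow_zero, pow_one] <;> module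
    rw [this, hB, hC]
    push_cast
    module
  have hbc : (b / 2) ^ 2 + (c / 2) ^ 2 = 1 := by
    have h := congrFun₂ (hsq 0) 0 0
    rw [hA 0, hPQ.smul_add_smul_mul_self, Matrix.smul_apply, one_apply_eq, smul_eq_mul, mul_one,
      Fin.val_zero, pow_zero, one_mul] at h
    apply Complex.ofReal_injective
    push_cast at h ⊢
    linear_combination h
  obtain ⟨α, hα, hcos, hsin⟩ :=
    Real.exists_mem_Icc_cos_eq_sin_eq (by positivity) (by positivity) hbc
  obtain ⟨U, hU, hUP, hUQ⟩ := hPQ.exists_unitary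
  refine ⟨U, hU, α, hα, fun x => ?_⟩
  rw [hA x, Matrix.mul_add, Matrix.add_mul, Matrix.mul_smul, Matrix.mul_smul, Matrix.smul_mul,
    Matrix.smul_mul, hUP, hUQ, hcos, hsin, add_comm]
end
end

section
/- Let n ≥ 2 and take the ideal observables A^{(j)}_x. Then for every s ∈ {0,1}^n, the GHZ-basis vector |ξ_s⟩ is an eigenvector of W_s with eigenvalue 2√2(n−1); that is, W_s |ξ_s⟩ = 2√2(n−1) |ξ_s⟩. -/
open Matrix Finset ComplexOrder

noncomputable section

/-- The ideal observables: `A^{(1)}_x = (σ_X + (−1)^x σ_Z)/√2`,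
`A^{(j)}_0 = σ_X`, `A^{(j)}_1 = σ_Z` for `j ≠ 1`. -/
def Aideal (n : ℕ) [NeZero n] : Fin n → Fin 2 → Mat2 :=
  fun j x =>
    if j = 0 then ((Real.sqrt 2 : ℂ))⁻¹ • (σX + ((-1 : ℂ) ^ ((x : ℕ))) • σZ)
    else if x = 0 then σX else σZ

/-- The GHZ-basis vector `|ξ_s⟩ = (|0 s₂ ⋯ s_n⟩ + (−1)^{s₁} |1 s̄₂ ⋯ s̄_n⟩)/√2`. -/
def ghz (n : ℕ) [NeZero n] (s : Fin n → Fin 2) : (Fin n → Fin 2) → ℂ :=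
  fun f => ((Real.sqrt 2 : ℂ))⁻¹ *
    ((if f = (fun j => if j = 0 then 0 else s j) then 1 else 0)
      + (-1 : ℂ) ^ ((s 0 : ℕ)) *
        (if f = (fun j => if j = 0 then 1 else 1 - s j) then 1 else 0))

/-!
For the ideal observables `A₀ + A₁ = √2 σ_X` and `A₀ - A₁ = √2 σ_Z` at the first site, so
`W_s = √2 ((n-1)(-1)^{s₁} X⊗⋯⊗X + ∑_{j ≥ 2} (-1)^{s_j} Z₁Z_j)`. The string operator `X⊗⋯⊗X`
swaps the two branches of `|ξ_s⟩` and so acts on it by `(-1)^{s₁}`, while `Z₁Z_j` is diagonal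
with the same eigenvalue `(-1)^{s_j}` on both branches (flipping every bit leaves a product of
two signs unchanged). Hence `W_s |ξ_s⟩ = √2 ((n-1) + (n-1)) |ξ_s⟩`.
-/

lemma neg_one_pow_mul_self (k : ℕ) : (-1 : ℂ) ^ k * (-1 : ℂ) ^ k = 1 := by
  rw [← mul_pow]
  norm_num

lemma neg_one_pow_sub_one_val (a : Fin 2) :
    (-1 : ℂ) ^ ((1 - a : Fin 2) : ℕ) = -(-1 : ℂ) ^ (a : ℕ) := by
  fin_cases a <;> simp

lemma tensorN_update_smul (n : ℕ) (M : Fin n → Mat2) (i : Fin n) (c : ℂ) :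
    tensorN n (Function.update M i (c • M i)) = c • tensorN n M := by
  ext f g
  simp only [tensorN, of_apply, Matrix.smul_apply, smul_eq_mul]
  rw [Fintype.prod_eq_mul_prod_compl i, Fintype.prod_eq_mul_prod_compl i, Function.update_self,
    Matrix.smul_apply, smul_eq_mul, mul_assoc]
  congr 2
  refine Finset.prod_congr rfl fun j hj => ?_
  rw [Function.update_of_ne (by simpa using hj)]

lemma tensorN_diagonal (n : ℕ) (d : Fin n → Fin 2 → ℂ) :
    tensorN n (fun j => diagonal (d j)) = diagonal (fun g => ∏ j, d j (g j)) := by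
  ext f g
  simp only [tensorN, of_apply, diagonal_apply, Finset.prod_ite_zero, funext_iff]
  simp

lemma σX_apply (a b : Fin 2) : σX a b = if a = 1 - b then 1 else 0 := by
  fin_cases a <;> fin_cases b <;> simp [σX]

lemma tensorN_σX_mulVec_single (n : ℕ) (g : Fin n → Fin 2) :
    tensorN n (fun _ => σX) *ᵥ Pi.single g 1 = Pi.single (fun j => 1 - g j) 1 := by
  ext f
  simp [tensorN, σX_apply, Finset.prod_boole, Pi.single_apply, funext_iff]

lemma σZ_eq_diagonal : σZ = diagonal fun b : Fin 2 => (-1 : ℂ) ^ (b : ℕ) := by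
  ext a b
  fin_cases a <;> fin_cases b <;> simp [σZ]

lemma tensorN_σZσZ_mulVec_single (n : ℕ) [NeZero n] {j : Fin n} (hj : j ≠ 0)
    (g : Fin n → Fin 2) :
    tensorN n (fun k => if k = 0 then σZ else if k = j then σZ else 1) *ᵥ Pi.single g 1
      = ((-1 : ℂ) ^ (g 0 : ℕ) * (-1 : ℂ) ^ (g j : ℕ)) • Pi.single g 1 := by
  have hdiag : (fun k => if k = 0 then σZ else if k = j then σZ else 1)
      = fun k => diagonal fun b : Fin 2 =>
          (if k = 0 then (-1 : ℂ) ^ (b : ℕ) else 1) * (if k = j then (-1 : ℂ) ^ (b : ℕ) else 1) := by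
    funext k
    by_cases h0 : k = 0
    · simp [h0, hj.symm, σZ_eq_diagonal]
    · by_cases h1 : k = j <;> simp [h0, h1, hj, σZ_eq_diagonal]
  rw [hdiag, tensorN_diagonal, diagonal_mulVec_single, Finset.prod_mul_distrib,
    Finset.prod_ite_eq', Finset.prod_ite_eq']
  simp [← Pi.single_smul']

lemma inv_sqrt_two_mul_two : ((Real.sqrt 2 : ℂ))⁻¹ * 2 = Real.sqrt 2 := by
  rw [inv_mul_eq_iff_eq_mul₀ (by simp), ← Complex.ofReal_mul, Real.mul_self_sqrt zero_le_two]
  simp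

lemma Aideal_zero_zero (n : ℕ) [NeZero n] : Aideal n 0 0 = ((Real.sqrt 2 : ℂ))⁻¹ • (σX + σZ) := by
  simp [Aideal]

lemma Aideal_zero_one (n : ℕ) [NeZero n] : Aideal n 0 1 = ((Real.sqrt 2 : ℂ))⁻¹ • (σX - σZ) := by
  simp [Aideal, sub_eq_add_neg]

lemma Aideal_zero_add (n : ℕ) [NeZero n] :
    Aideal n 0 0 + Aideal n 0 1 = (Real.sqrt 2 : ℂ) • σX := by
  rw [Aideal_zero_zero, Aideal_zero_one, ← smul_add, add_add_sub_cancel, ← two_smul ℂ σX, smul_smul,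
    inv_sqrt_two_mul_two]

lemma Aideal_zero_sub (n : ℕ) [NeZero n] :
    Aideal n 0 0 - Aideal n 0 1 = (Real.sqrt 2 : ℂ) • σZ := by
  rw [Aideal_zero_zero, Aideal_zero_one, ← smul_sub, add_sub_sub_cancel, ← two_smul ℂ σZ, smul_smul,
    inv_sqrt_two_mul_two]

lemma Wop_Aideal (n : ℕ) [NeZero n] (s : Fin n → Fin 2) :
    Wop n (Aideal n) s = (Real.sqrt 2 : ℂ) •
      ((((n : ℂ) - 1) * (-1 : ℂ) ^ (s 0 : ℕ)) • tensorN n (fun _ => σX)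
        + ∑ j ∈ Finset.univ.filter (fun j : Fin n => j ≠ 0), (-1 : ℂ) ^ (s j : ℕ) •
            tensorN n (fun k => if k = 0 then σZ else if k = j then σZ else 1)) := by
  have hX : (fun j => if j = 0 then Aideal n 0 0 + Aideal n 0 1 else Aideal n j 0)
      = Function.update (fun _ => σX) 0 ((Real.sqrt 2 : ℂ) • σX) := by
    funext j
    by_cases h : j = 0
    · simp [h, Aideal_zero_add]
    · simp [h, Aideal]
  rw [Wop, hX, tensorN_update_smul, smul_add, Finset.smul_sum, smul_comm]
  congr 1
  refine Finset.sum_congr rfl fun j hj => ?_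
  have hj0 : j ≠ 0 := (Finset.mem_filter.mp hj).2
  set ZZ : Fin n → Mat2 := fun k => if k = 0 then σZ else if k = j then σZ else 1
  have hZZ : (fun k => if k = 0 then Aideal n 0 0 - Aideal n 0 1
      else if k = j then Aideal n j 1 else 1) = Function.update ZZ 0 ((Real.sqrt 2 : ℂ) • ZZ 0) := by
    funext k
    by_cases h0 : k = 0
    · simp [ZZ, h0, Aideal_zero_sub]
    · by_cases h1 : k = j <;> simp [ZZ, h0, h1, hj0, Aideal]
  rw [hZZ, tensorN_update_smul, smul_comm]

/-- The string `0 s₂ ⋯ sₙ`; the other branch of `ghz n s` is its bitwise complement. -/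
def ghzBits (n : ℕ) [NeZero n] (s : Fin n → Fin 2) : Fin n → Fin 2 :=
  fun j => if j = 0 then 0 else s j

lemma ghz_eq (n : ℕ) [NeZero n] (s : Fin n → Fin 2) :
    ghz n s = ((Real.sqrt 2 : ℂ))⁻¹ • (Pi.single (ghzBits n s) 1
      + (-1 : ℂ) ^ (s 0 : ℕ) • Pi.single (fun j => 1 - ghzBits n s j) 1) := by
  have hflip : (fun j : Fin n => 1 - ghzBits n s j) = fun j => if j = 0 then 1 else 1 - s j := by
    funext j
    by_cases h : j = 0 <;> simp [ghzBits, h]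
  rw [hflip]
  ext f
  simp only [ghz, Pi.add_apply, Pi.smul_apply, Pi.single_apply, smul_eq_mul, mul_ite, mul_one,
    mul_zero]
  rfl

lemma tensorN_σX_mulVec_ghz (n : ℕ) [NeZero n] (s : Fin n → Fin 2) :
    tensorN n (fun _ => σX) *ᵥ ghz n s = (-1 : ℂ) ^ (s 0 : ℕ) • ghz n s := by
  have hinv : (fun j : Fin n => 1 - (1 - ghzBits n s j)) = ghzBits n s := by
    funext j
    exact sub_sub_cancel 1 _
  rw [ghz_eq, mulVec_smul, mulVec_add, mulVec_smul, tensorN_σX_mulVec_single,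
    tensorN_σX_mulVec_single, hinv, smul_comm ((-1 : ℂ) ^ (s 0 : ℕ)) ((Real.sqrt 2 : ℂ))⁻¹]
  congr 1
  rw [smul_add, smul_smul, neg_one_pow_mul_self, one_smul, add_comm]

lemma tensorN_σZσZ_mulVec_ghz (n : ℕ) [NeZero n] (s : Fin n → Fin 2) {j : Fin n} (hj : j ≠ 0) :
    tensorN n (fun k => if k = 0 then σZ else if k = j then σZ else 1) *ᵥ ghz n s
      = (-1 : ℂ) ^ (s j : ℕ) • ghz n s := by
  have heigen : (-1 : ℂ) ^ (ghzBits n s 0 : ℕ) * (-1 : ℂ) ^ (ghzBits n s j : ℕ) = (-1) ^ (s j : ℕ) := by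
    simp [ghzBits, hj]
  rw [ghz_eq, mulVec_smul, mulVec_add, mulVec_smul, tensorN_σZσZ_mulVec_single n hj,
    tensorN_σZσZ_mulVec_single n hj, neg_one_pow_sub_one_val, neg_one_pow_sub_one_val,
    neg_mul_neg, smul_comm ((-1 : ℂ) ^ (s 0 : ℕ)), ← smul_add, smul_comm _ ((-1 : ℂ) ^ _ * _),
    heigen]

theorem stmt9_general (n : ℕ) [NeZero n] (s : Fin n → Fin 2) :
    (Wop n (Aideal n) s).mulVec (ghz n s)
      = ((2 * Real.sqrt 2 * ((n : ℝ) - 1) : ℝ) : ℂ) • ghz n s := by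
  have hZZ : ∑ j ∈ Finset.univ.filter (fun j : Fin n => j ≠ 0), ((-1 : ℂ) ^ (s j : ℕ) •
        tensorN n (fun k => if k = 0 then σZ else if k = j then σZ else 1)) *ᵥ ghz n s
      = ((n : ℂ) - 1) • ghz n s := by
    rw [Finset.sum_congr rfl fun j hj => by
      rw [smul_mulVec, tensorN_σZσZ_mulVec_ghz n s (Finset.mem_filter.mp hj).2, smul_smul,
        neg_one_pow_mul_self, one_smul]]
    rw [Finset.sum_const, Finset.filter_ne', Finset.card_erase_of_mem (Finset.mem_univ _),
      Finset.card_univ, Fintype.card_fin, ← Nat.cast_smul_eq_nsmul ℂ, Nat.cast_pred (NeZero.pos n)]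
  rw [Wop_Aideal, smul_mulVec, add_mulVec, smul_mulVec, tensorN_σX_mulVec_ghz, sum_mulVec, hZZ,
    smul_smul, ← add_smul, smul_smul]
  congr 1
  push_cast
  linear_combination (Real.sqrt 2 * ((n : ℂ) - 1)) * neg_one_pow_mul_self (s 0 : ℕ)

/-- for the ideal observables, `|ξ_s⟩` is an eigenvector of `W_s`
with eigenvalue `2√2(n−1)`. -/
theorem stmt9 (n : ℕ) [NeZero n] (hn : 2 ≤ n) (s : Fin n → Fin 2) :
    (Wop n (Aideal n) s).mulVec (ghz n s)
      = ((2 * Real.sqrt 2 * ((n : ℝ) - 1) : ℝ) : ℂ) • ghz n s :=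
  stmt9_general n s
end
end

section
/- (Appendix B antipodality lemma.) Let n ≥ 2 and let {M_s}_{s∈{0,1}^n} be a POVM on ℂ^{2^n}. For any 2×2 density matrices ρ^{(j)}_{a|x} (j ∈ {1,…,n}, a, x ∈ {0,1}), there exist unit vectors ψ^{(j)}_{a|x} ∈ ℂ² with ⟨ψ^{(j)}_{0|x}, ψ^{(j)}_{1|x}⟩ = 0 for every j and x, such that Σ_{s∈{0,1}^n} Tr(M_s W̃_s) ≥ Σ_{s∈{0,1}^n} Tr(M_s W_s), where W_s is built from A^{(j)}_x = ρ^{(j)}_{0|x} − ρ^{(j)}_{1|x} and W̃_s from Ã^{(j)}_x = |ψ^{(j)}_{0|x}⟩⟨ψ^{(j)}_{0|x}| − |ψ^{(j)}_{1|x}⟩⟨ψ^{(j)}_{1|x}|. Consequently, for any fixed POVM, the supremum of the success metric S = (1/(2^n (n−1) 2√2)) Σ_s Tr(M_s W_s) over all density-matrix messages is attained on messages that are pure and pairwise orthogonal (antipodal) for each fixed j and x. -/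
open Matrix Finset ComplexOrder

noncomputable section

/-- The observables built from pure-state (unit-vector) preparations. -/
def Apure (n : ℕ) (ψ : Fin n → Fin 2 → Fin 2 → (Fin 2 → ℂ)) :
    Fin n → Fin 2 → Mat2 :=
  fun j x => vecMulVec (ψ j 0 x) (star (ψ j 0 x)) - vecMulVec (ψ j 1 x) (star (ψ j 1 x))

/-!
Each `W_s` is a sum of tensor products in which the `k`-th factor depends only on the
observables `A^{(k)}_0, A^{(k)}_1`, so `∑_s Tr(M_s W_s)` is affine in every single observable.
For density matrices, `ρ_{0|x} - ρ_{1|x}` is a traceless Hermitian matrix with eigenvalues `±t`,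
`|t| ≤ 1`, hence a convex combination of an antipodal observable `|ψ₀⟩⟨ψ₀| - |ψ₁⟩⟨ψ₁|` and its
negative, which is antipodal as well. Replacing the observables one at a time by the better
endpoint never decreases the (real) value. For the attainment statement, the antipodal families
form a compact set, on which the value is a continuous function; its maximum dominates every
density-matrix value by the first part.
-/

section AffineFun

variable {R V W : Type*} [CommRing R] [AddCommGroup V] [Module R V] [AddCommGroup W] [Module R W]

variable (R) in
def IsAffineFun (f : V → W) : Prop :=
  ∀ (x y : V) (a b : R), a + b = 1 → f (a • x + b • y) = a • f x + b • f y

lemma isAffineFun_const (w : W) : IsAffineFun R fun _ : V => w := fun _ _ a b hab => by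
  rw [← add_smul, hab, one_smul]

lemma LinearMap.isAffineFun (L : V →ₗ[R] W) : IsAffineFun R L := fun _ _ _ _ _ => by
  rw [map_add, map_smul, map_smul]

lemma isAffineFun_apply {ι : Type*} (i : ι) : IsAffineFun R fun u : ι → W => u i :=
  fun _ _ _ _ _ => rfl

namespace IsAffineFun

variable {U : Type*} [AddCommGroup U] [Module R U] {f g : V → W}

lemma comp {h : W → U} (hh : IsAffineFun R h) (hf : IsAffineFun R f) :
    IsAffineFun R fun v => h (f v) := fun x y a b hab => by
  dsimp only; rw [hf x y a b hab, hh _ _ a b hab]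

lemma add (hf : IsAffineFun R f) (hg : IsAffineFun R g) : IsAffineFun R fun v => f v + g v :=
  fun x y a b hab => by dsimp only; rw [hf x y a b hab, hg x y a b hab]; module

lemma sub (hf : IsAffineFun R f) (hg : IsAffineFun R g) : IsAffineFun R fun v => f v - g v :=
  fun x y a b hab => by dsimp only; rw [hf x y a b hab, hg x y a b hab]; module

lemma const_smul (hf : IsAffineFun R f) (c : R) : IsAffineFun R fun v => c • f v :=
  fun x y a b hab => by dsimp only; rw [hf x y a b hab]; module

lemma sum {ι : Type*} (s : Finset ι) {f : ι → V → W} (hf : ∀ i ∈ s, IsAffineFun R (f i)) :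
    IsAffineFun R fun v => ∑ i ∈ s, f i v := fun x y a b hab => by
  simp only [Finset.smul_sum, ← Finset.sum_add_distrib]
  exact Finset.sum_congr rfl fun i hi => hf i hi x y a b hab

lemma pi {ι : Type*} {f : V → ι → W} (hf : ∀ i, IsAffineFun R fun v => f v i) :
    IsAffineFun R f := fun x y a b hab => funext fun i => hf i x y a b hab

end IsAffineFun

lemma isAffineFun_update {ι : Type*} [DecidableEq ι] (y : ι → W) (i : ι) :
    IsAffineFun R (Function.update y i) :=
  IsAffineFun.pi fun j => by
    by_cases h : j = i
    · subst h; simp only [Function.update_self]; exact fun _ _ _ _ _ => rfl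
    · simpa [Function.update_of_ne h] using isAffineFun_const (y j)

lemma IsAffineFun.convexOn_re {V : Type*} [AddCommGroup V] [Module ℂ V] {f : V → ℂ}
    (hf : IsAffineFun ℂ f) : ConvexOn ℝ Set.univ fun v => (f v).re := by
  refine ⟨convex_univ, fun x _ y _ a b _ _ hab => le_of_eq ?_⟩
  have := hf x y a b (by exact_mod_cast hab)
  rw [Complex.coe_smul, Complex.coe_smul] at this
  simp [this]

end AffineFun

theorem exists_forall_mem_le_of_convexOn_update {𝕜 ι E β : Type*} [Fintype ι] [DecidableEq ι]
    [Field 𝕜] [LinearOrder 𝕜] [IsStrictOrderedRing 𝕜] [AddCommGroup E] [Module 𝕜 E]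
    [AddCommGroup β] [LinearOrder β] [IsOrderedAddMonoid β] [Module 𝕜 β]
    [IsStrictOrderedModule 𝕜 β] {F : (ι → E) → β} {s : Set E}
    (hF : ∀ x i, ConvexOn 𝕜 (convexHull 𝕜 s) fun v => F (Function.update x i v))
    {x : ι → E} (hx : ∀ i, x i ∈ convexHull 𝕜 s) : ∃ y, (∀ i, y i ∈ s) ∧ F x ≤ F y := by
  suffices key : ∀ (t : Finset ι) (x : ι → E), (∀ i, x i ∈ convexHull 𝕜 s) →
      (∀ i ∉ t, x i ∈ s) → ∃ y, (∀ i, y i ∈ s) ∧ F x ≤ F y from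
    key Finset.univ x hx fun i hi => absurd (Finset.mem_univ i) hi
  intro t
  induction t using Finset.induction_on with
  | empty => exact fun x _ hxs => ⟨x, fun i => hxs i (Finset.notMem_empty i), le_rfl⟩
  | insert i t _ ih =>
    intro x hx hxs
    obtain ⟨e, he, hle⟩ :=
      (hF x i).exists_ge_of_mem_convexHull (subset_convexHull 𝕜 s) (hx i)
    rw [Function.update_eq_self] at hle
    have hx' : ∀ k, Function.update x i e k ∈ convexHull 𝕜 s := fun k => by
      by_cases h : k = i
      · subst h; simpa using subset_convexHull 𝕜 s he
      · simpa [h] using hx k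
    have hxs' : ∀ k ∉ t, Function.update x i e k ∈ s := fun k hk => by
      by_cases h : k = i
      · subst h; simpa using he
      · simpa [h] using hxs k (by simp [h, hk])
    obtain ⟨y, hy, hFy⟩ := ih (Function.update x i e) hx' hxs'
    exact ⟨y, hy, hle.trans hFy⟩

lemma tensorN_update_apply {n : ℕ} (M : Fin n → Mat2) (j : Fin n) (X : Mat2)
    (f g : Fin n → Fin 2) :
    tensorN n (Function.update M j X) f g
      = X (f j) (g j) * ∏ k ∈ Finset.univ.erase j, M k (f k) (g k) := by
  rw [tensorN, of_apply, ← Finset.mul_prod_erase _ _ (Finset.mem_univ j), Function.update_self]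
  exact congrArg _ (Finset.prod_congr rfl fun k hk => by
    rw [Function.update_of_ne (Finset.ne_of_mem_erase hk)])

def tensorNMultilinear (n : ℕ) :
    MultilinearMap ℂ (fun _ : Fin n => Mat2) (Matrix (Fin n → Fin 2) (Fin n → Fin 2) ℂ) :=
  MultilinearMap.mk' (tensorN n)
    (fun M j X Y => by ext f g; simp only [tensorN_update_apply, Matrix.add_apply]; ring)
    (fun M j c X => by
      ext f g; simp only [tensorN_update_apply, Matrix.smul_apply, smul_eq_mul]; ring)

lemma isAffineFun_tensorN {V : Type*} [AddCommGroup V] [Module ℂ V] {n : ℕ}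
    {G : V → Fin n → Mat2} (j : Fin n) (hG : ∀ v w k, k ≠ j → G v k = G w k)
    (hj : IsAffineFun ℂ fun v => G v j) :
    IsAffineFun ℂ fun v => tensorN n (G v) := by
  intro x y a b hab
  have hL : ∀ v, tensorN n (G v) = (tensorNMultilinear n).toLinearMap (G x) j (G v j) := by
    intro v
    refine congrArg (tensorN n) (funext fun k => ?_)
    by_cases hk : k = j
    · subst hk; simp
    · simp [hk, hG v x k hk]
  simp only [hL, hj x y a b hab, map_add, map_smul]

lemma isAffineFun_tensorN_curry_update {n : ℕ} {Φ : Fin n → (Fin 2 → Mat2) → Mat2}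
    (hΦ : ∀ k, IsAffineFun ℂ (Φ k)) (y : Fin n × Fin 2 → Mat2) (p : Fin n × Fin 2) :
    IsAffineFun ℂ fun v => tensorN n fun k => Φ k (Function.curry (Function.update y p v) k) := by
  refine isAffineFun_tensorN p.1 (fun v w k hk => ?_) ((hΦ p.1).comp ?_)
  · refine congrArg (Φ k) (funext fun x => ?_)
    have hne : (k, x) ≠ p := fun h => hk (congrArg Prod.fst h)
    simp only [Function.curry, Function.update_of_ne hne]
  · exact IsAffineFun.pi fun x => (isAffineFun_apply (p.1, x)).comp (isAffineFun_update y p)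

lemma isHermitian_tensorN {n : ℕ} {M : Fin n → Mat2} (hM : ∀ k, (M k).IsHermitian) :
    (tensorN n M).IsHermitian := by
  ext f g
  simp only [conjTranspose_apply, tensorN, of_apply, star_prod]
  exact Finset.prod_congr rfl fun k _ => (hM k).apply (f k) (g k)

@[fun_prop]
lemma continuous_tensorN {n : ℕ} : Continuous (tensorN n) := by
  unfold tensorN; fun_prop

namespace Wop

variable {n : ℕ} [NeZero n] {u : Fin 2 → Mat2}

def leadFactor (k : Fin n) : (Fin 2 → Mat2) → Mat2 :=
  if k = 0 then fun u => u 0 + u 1 else fun u => u 0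

def termFactor (j k : Fin n) : (Fin 2 → Mat2) → Mat2 :=
  if k = 0 then fun u => u 0 - u 1 else if k = j then fun u => u 1 else fun _ => 1

lemma isAffineFun_leadFactor (k : Fin n) : IsAffineFun ℂ (leadFactor k) := by
  unfold leadFactor
  split_ifs
  · exact (isAffineFun_apply 0).add (isAffineFun_apply 1)
  · exact isAffineFun_apply 0

lemma isAffineFun_termFactor (j k : Fin n) : IsAffineFun ℂ (termFactor j k) := by
  unfold termFactor
  split_ifs
  · exact (isAffineFun_apply 0).sub (isAffineFun_apply 1)
  · exact isAffineFun_apply 1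
  · exact isAffineFun_const 1

lemma isHermitian_leadFactor (hu : ∀ x, (u x).IsHermitian) (k : Fin n) :
    (leadFactor k u).IsHermitian := by
  unfold leadFactor
  split_ifs
  · exact (hu 0).add (hu 1)
  · exact hu 0

lemma isHermitian_termFactor (hu : ∀ x, (u x).IsHermitian) (j k : Fin n) :
    (termFactor j k u).IsHermitian := by
  unfold termFactor
  split_ifs
  · exact (hu 0).sub (hu 1)
  · exact hu 1
  · exact isHermitian_one

@[fun_prop]
lemma continuous_leadFactor (k : Fin n) : Continuous (leadFactor k) := by
  unfold leadFactor; split_ifs <;> fun_prop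

@[fun_prop]
lemma continuous_termFactor (j k : Fin n) : Continuous (termFactor j k) := by
  unfold termFactor; split_ifs <;> fun_prop

end Wop

open Wop in
lemma Wop_eq_factors (n : ℕ) [NeZero n] (A : Fin n → Fin 2 → Mat2) (s : Fin n → Fin 2) :
    Wop n A s = (((n : ℂ) - 1) * (-1 : ℂ) ^ ((s 0 : ℕ))) • tensorN n (fun k => leadFactor k (A k))
      + ∑ j ∈ Finset.univ.filter (fun j : Fin n => j ≠ 0),
          ((-1 : ℂ) ^ ((s j : ℕ))) • tensorN n (fun k => termFactor j k (A k)) := by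
  have lead : (fun k => if k = 0 then A 0 0 + A 0 1 else A k 0) = fun k => leadFactor k (A k) := by
    funext k; unfold leadFactor; split_ifs with hk <;> simp [hk]
  have term (j : Fin n) : (fun k => if k = 0 then A 0 0 - A 0 1 else if k = j then A j 1 else 1)
      = fun k => termFactor j k (A k) := by
    funext k; unfold termFactor; split_ifs with hk hkj
    · simp [hk]
    · simp [hkj]
    · rfl
  simp only [Wop, lead, term]

open Wop in
lemma isAffineFun_Wop_curry_update {n : ℕ} [NeZero n] (y : Fin n × Fin 2 → Mat2)
    (p : Fin n × Fin 2) (s : Fin n → Fin 2) :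
    IsAffineFun ℂ fun v => Wop n (Function.curry (Function.update y p v)) s := by
  simp only [Wop_eq_factors]
  exact ((isAffineFun_tensorN_curry_update isAffineFun_leadFactor y p).const_smul _).add
    (IsAffineFun.sum _ fun j _ =>
      (isAffineFun_tensorN_curry_update (isAffineFun_termFactor j) y p).const_smul _)

open Wop in
lemma isHermitian_Wop {n : ℕ} [NeZero n] {A : Fin n → Fin 2 → Mat2}
    (hA : ∀ j x, (A j x).IsHermitian) (s : Fin n → Fin 2) : (Wop n A s).IsHermitian := by
  rw [Wop_eq_factors]
  refine IsSelfAdjoint.add (IsSelfAdjoint.smul (by simp [IsSelfAdjoint])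
    (isHermitian_tensorN fun k => isHermitian_leadFactor (hA k) k))
    (isSelfAdjoint_sum _ fun j _ => ?_)
  exact IsSelfAdjoint.smul (by simp [IsSelfAdjoint])
    (isHermitian_tensorN fun k => isHermitian_termFactor (hA k) j k)

def antipodalObs (φ : Fin 2 → Fin 2 → ℂ) : Mat2 :=
  vecMulVec (φ 0) (star (φ 0)) - vecMulVec (φ 1) (star (φ 1))

def IsAntipodalPair (φ : Fin 2 → Fin 2 → ℂ) : Prop :=
  (∀ a, star (φ a) ⬝ᵥ φ a = 1) ∧ star (φ 0) ⬝ᵥ φ 1 = 0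

lemma IsAntipodalPair.swap {φ : Fin 2 → Fin 2 → ℂ} (h : IsAntipodalPair φ) :
    IsAntipodalPair ![φ 1, φ 0] := by
  refine ⟨fun a => by fin_cases a <;> simp [h.1], ?_⟩
  simp [star_dotProduct (φ 1), h.2]

lemma antipodalObs_swap (φ : Fin 2 → Fin 2 → ℂ) :
    antipodalObs ![φ 1, φ 0] = -antipodalObs φ := by
  simp [antipodalObs]

lemma isHermitian_antipodalObs (φ : Fin 2 → Fin 2 → ℂ) : (antipodalObs φ).IsHermitian :=
  (posSemidef_vecMulVec_self_star (φ 0)).1.sub (posSemidef_vecMulVec_self_star (φ 1)).1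

section Score

variable {n : ℕ} [NeZero n] (M : (Fin n → Fin 2) → Matrix (Fin n → Fin 2) (Fin n → Fin 2) ℂ)

-- The success metric `S`, up to the positive factor `1 / (2^n (n-1) 2√2)`.
def score (A : Fin n → Fin 2 → Mat2) : ℂ :=
  ∑ s, (M s * Wop n A s).trace

lemma isAffineFun_score_curry_update (y : Fin n × Fin 2 → Mat2) (p : Fin n × Fin 2) :
    IsAffineFun ℂ fun v => score M (Function.curry (Function.update y p v)) :=
  IsAffineFun.sum _ fun s _ =>
    ((traceLinearMap _ ℂ ℂ ∘ₗ LinearMap.mulLeft ℂ (M s)).isAffineFun).comp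
      (isAffineFun_Wop_curry_update y p s)

lemma continuous_score : Continuous (score M) := by
  unfold score
  simp only [Wop_eq_factors]
  fun_prop

variable {M} (hM : ∀ s, (M s).IsHermitian)
include hM

lemma score_im_eq_zero {A : Fin n → Fin 2 → Mat2} (hA : ∀ j x, (A j x).IsHermitian) :
    (score M A).im = 0 := by
  refine Complex.conj_eq_iff_im.mp ?_
  rw [score, map_sum]
  refine Finset.sum_congr rfl fun s _ => ?_
  rw [← Complex.star_def, ← trace_conjTranspose, conjTranspose_mul, (hM s).eq,
    (isHermitian_Wop hA s).eq, trace_mul_comm]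

lemma score_le_score_of_re_le {A B : Fin n → Fin 2 → Mat2} (hA : ∀ j x, (A j x).IsHermitian)
    (hB : ∀ j x, (B j x).IsHermitian) (h : (score M A).re ≤ (score M B).re) :
    score M A ≤ score M B :=
  Complex.le_def.mpr ⟨h, by rw [score_im_eq_zero hM hA, score_im_eq_zero hM hB]⟩

lemma score_sub_le_score_Apure_of_re_le {ρ : Fin n → Fin 2 → Fin 2 → Mat2}
    (hρ : ∀ j a x, (ρ j a x).PosSemidef) {ψ : Fin n → Fin 2 → Fin 2 → (Fin 2 → ℂ)}
    (h : (score M fun j x => ρ j 0 x - ρ j 1 x).re ≤ (score M (Apure n ψ)).re) :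
    score M (fun j x => ρ j 0 x - ρ j 1 x) ≤ score M (Apure n ψ) :=
  score_le_score_of_re_le hM (fun j x => (hρ j 0 x).1.sub (hρ j 1 x).1)
    (fun j x => isHermitian_antipodalObs fun a => ψ j a x) h

end Score

section EigenDecomposition

variable {m : Type*} [Fintype m] [DecidableEq m] {U : Matrix m m ℂ}

lemma trace_eq_sum_star_col_dotProduct_mulVec (hU : U ∈ unitaryGroup m ℂ) (A : Matrix m m ℂ) :
    A.trace = ∑ i, star (Uᵀ i) ⬝ᵥ (A *ᵥ Uᵀ i) := by
  calc A.trace = (star U * A * U).trace := by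
        rw [mul_assoc, trace_mul_comm, mul_assoc, Matrix.mem_unitaryGroup_iff.mp hU, mul_one]
    _ = ∑ i, star (Uᵀ i) ⬝ᵥ (A *ᵥ Uᵀ i) := by
        refine Finset.sum_congr rfl fun i _ => ?_
        simp only [Matrix.diag_apply, mul_apply, dotProduct, mulVec, Pi.star_apply, transpose_apply,
          star_apply, Finset.sum_mul, Finset.mul_sum]
        rw [Finset.sum_comm]
        simp only [mul_assoc]

lemma Matrix.PosSemidef.re_star_col_dotProduct_mulVec_le (hU : U ∈ unitaryGroup m ℂ)
    {A : Matrix m m ℂ} (hA : A.PosSemidef) (i : m) :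
    (star (Uᵀ i) ⬝ᵥ (A *ᵥ Uᵀ i)).re ≤ A.trace.re := by
  rw [trace_eq_sum_star_col_dotProduct_mulVec hU, Complex.re_sum]
  exact Finset.single_le_sum (fun j _ => hA.re_dotProduct_nonneg _) (Finset.mem_univ i)

variable {T : Matrix m m ℂ} (hT : T.IsHermitian)
include hT

lemma Matrix.IsHermitian.star_eigenvectorBasis_dotProduct (i j : m) :
    star ⇑(hT.eigenvectorBasis i) ⬝ᵥ ⇑(hT.eigenvectorBasis j) = if i = j then 1 else 0 := by
  rw [dotProduct_comm, ← EuclideanSpace.inner_eq_star_dotProduct,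
    orthonormal_iff_ite.mp hT.eigenvectorBasis.orthonormal]

lemma Matrix.IsHermitian.eq_sum_eigenvalues_smul_vecMulVec :
    T = ∑ i, (hT.eigenvalues i : ℂ) •
      vecMulVec ⇑(hT.eigenvectorBasis i) (star ⇑(hT.eigenvectorBasis i)) := by
  conv_lhs => rw [hT.spectral_theorem, Unitary.conjStarAlgAut_apply]
  ext a b
  simp only [Complex.coe_algebraMap, mul_apply, eigenvectorUnitary_apply, diagonal_apply,
    Function.comp_apply, mul_ite, mul_zero, Finset.sum_ite_eq', Finset.mem_univ, if_true,
    star_apply, RCLike.star_def, Complex.coe_smul, Matrix.sum_apply, Matrix.smul_apply,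
    vecMulVec_apply, Pi.star_apply, Complex.real_smul]
  exact Finset.sum_congr rfl fun _ _ => by ring

end EigenDecomposition

lemma exists_isAntipodalPair_sub_mem_segment {ρ₀ ρ₁ : Mat2} (h₀ : ρ₀.PosSemidef)
    (h₁ : ρ₁.PosSemidef) (htr₀ : ρ₀.trace = 1) (htr₁ : ρ₁.trace = 1) :
    ∃ φ, IsAntipodalPair φ ∧ ρ₀ - ρ₁ ∈ segment ℝ (antipodalObs φ) (-antipodalObs φ) := by
  have hT : (ρ₀ - ρ₁).IsHermitian := h₀.1.sub h₁.1
  let φ : Fin 2 → Fin 2 → ℂ := fun i => ⇑(hT.eigenvectorBasis i)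
  have hφ : IsAntipodalPair φ :=
    ⟨fun a => by simpa using hT.star_eigenvectorBasis_dotProduct a a,
      by simpa using hT.star_eigenvectorBasis_dotProduct 0 1⟩
  have ht₁ : hT.eigenvalues 1 = -hT.eigenvalues 0 := by
    have h := hT.trace_eq_sum_eigenvalues
    rw [trace_sub, htr₀, htr₁, sub_self, Fin.sum_univ_two] at h
    have := congrArg Complex.re h
    simp only [Complex.zero_re, Complex.coe_algebraMap, Complex.add_re, Complex.ofReal_re] at this
    linarith
  have hT_eq : ρ₀ - ρ₁ = (hT.eigenvalues 0 : ℂ) • antipodalObs φ := by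
    conv_lhs => rw [hT.eq_sum_eigenvalues_smul_vecMulVec]
    rw [Fin.sum_univ_two, ht₁, antipodalObs, smul_sub]
    simp [φ, sub_eq_add_neg]
  have quad_bounds (ρ : Mat2) (hρ : ρ.PosSemidef) (htr : ρ.trace = 1) :
      0 ≤ (star (φ 0) ⬝ᵥ (ρ *ᵥ φ 0)).re ∧ (star (φ 0) ⬝ᵥ (ρ *ᵥ φ 0)).re ≤ 1 := by
    refine ⟨hρ.re_dotProduct_nonneg _, ?_⟩
    simpa [htr] using hρ.re_star_col_dotProduct_mulVec_le hT.eigenvectorUnitary.2 0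
  have ht₀ : hT.eigenvalues 0
      = (star (φ 0) ⬝ᵥ (ρ₀ *ᵥ φ 0)).re - (star (φ 0) ⬝ᵥ (ρ₁ *ᵥ φ 0)).re := by
    rw [hT.eigenvalues_eq, sub_mulVec, dotProduct_sub]
    simp [φ]
  obtain ⟨lo₀, hi₀⟩ := quad_bounds ρ₀ h₀ htr₀
  obtain ⟨lo₁, hi₁⟩ := quad_bounds ρ₁ h₁ htr₁
  generalize hT.eigenvalues 0 = t at *
  refine ⟨φ, hφ, (1 + t) / 2, (1 - t) / 2, by linarith, by linarith, by ring, ?_⟩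
  rw [hT_eq, ← Complex.coe_smul]
  module

lemma sub_mem_convexHull_antipodalObs {ρ₀ ρ₁ : Mat2} (h₀ : ρ₀.PosSemidef) (h₁ : ρ₁.PosSemidef)
    (htr₀ : ρ₀.trace = 1) (htr₁ : ρ₁.trace = 1) :
    ρ₀ - ρ₁ ∈ convexHull ℝ (antipodalObs '' {φ | IsAntipodalPair φ}) := by
  obtain ⟨φ, hφ, hseg⟩ := exists_isAntipodalPair_sub_mem_segment h₀ h₁ htr₀ htr₁
  have hpos : antipodalObs φ ∈ antipodalObs '' {φ | IsAntipodalPair φ} := ⟨φ, hφ, rfl⟩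
  have hneg : -antipodalObs φ ∈ antipodalObs '' {φ | IsAntipodalPair φ} :=
    ⟨_, hφ.swap, antipodalObs_swap φ⟩
  exact segment_subset_convexHull hpos hneg hseg

lemma norm_apply_le_one_of_star_dotProduct_self {m : Type*} [Fintype m] {v : m → ℂ}
    (hv : star v ⬝ᵥ v = 1) (i : m) : ‖v i‖ ≤ 1 := by
  have hnorm : ‖WithLp.toLp 2 v‖ = 1 := by
    have h := inner_self_eq_norm_sq_to_K (𝕜 := ℂ) (WithLp.toLp 2 v)
    rw [EuclideanSpace.inner_toLp_toLp, dotProduct_comm, hv] at h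
    have h' : ‖WithLp.toLp 2 v‖ ^ 2 = 1 := by
      simp only [Complex.coe_algebraMap] at h
      exact_mod_cast h.symm
    exact (pow_eq_one_iff_of_nonneg (norm_nonneg _) two_ne_zero).mp h'
  calc ‖v i‖ = ‖(WithLp.toLp 2 v) i‖ := rfl
    _ ≤ ‖WithLp.toLp 2 v‖ := PiLp.norm_apply_le _ i
    _ = 1 := hnorm

lemma isClosed_setOf_isAntipodalPair : IsClosed {φ | IsAntipodalPair φ} := by
  simp only [IsAntipodalPair, Set.ofPred_and, Set.ofPred_forall]
  exact (isClosed_iInter fun a => isClosed_eq (by fun_prop) (by fun_prop)).inter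
    (isClosed_eq (by fun_prop) (by fun_prop))

def antipodalFamilies (n : ℕ) : Set (Fin n → Fin 2 → Fin 2 → (Fin 2 → ℂ)) :=
  {ψ | ∀ j x, IsAntipodalPair fun a => ψ j a x}

lemma isCompact_antipodalFamilies (n : ℕ) : IsCompact (antipodalFamilies n) := by
  have hball := isCompact_closedBall (0 : ℂ) 1
  refine (isCompact_univ_pi fun _ => isCompact_univ_pi fun _ => isCompact_univ_pi fun _ =>
    isCompact_univ_pi fun _ => hball).of_isClosed_subset ?_ ?_
  · simp only [antipodalFamilies, Set.ofPred_forall]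
    exact isClosed_iInter fun j => isClosed_iInter fun x =>
      isClosed_setOf_isAntipodalPair.preimage (by fun_prop)
  · intro ψ hψ j _ a _ x _ i _
    simpa using norm_apply_le_one_of_star_dotProduct_self ((hψ j x).1 a) i

lemma single_mem_antipodalFamilies (n : ℕ) :
    (fun _ a _ => Pi.single a 1) ∈ antipodalFamilies n :=
  fun _ _ => ⟨fun a => by simp, by simp⟩

lemma continuous_Apure (n : ℕ) : Continuous (Apure n) := by
  unfold Apure
  fun_prop

lemma exists_isMaxOn_re_score_Apure {n : ℕ} [NeZero n]
    (M : (Fin n → Fin 2) → Matrix (Fin n → Fin 2) (Fin n → Fin 2) ℂ) :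
    ∃ ψ ∈ antipodalFamilies n,
      IsMaxOn (fun ψ => (score M (Apure n ψ)).re) (antipodalFamilies n) ψ :=
  (isCompact_antipodalFamilies n).exists_isMaxOn ⟨_, single_mem_antipodalFamilies n⟩
    (Complex.continuous_re.comp ((continuous_score M).comp (continuous_Apure n))).continuousOn

lemma exists_mem_antipodalFamilies_re_score_le {n : ℕ} [NeZero n]
    (M : (Fin n → Fin 2) → Matrix (Fin n → Fin 2) (Fin n → Fin 2) ℂ)
    {ρ : Fin n → Fin 2 → Fin 2 → Mat2} (hρ : ∀ j a x, (ρ j a x).PosSemidef)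
    (hρtr : ∀ j a x, (ρ j a x).trace = 1) :
    ∃ ψ ∈ antipodalFamilies n,
      (score M fun j x => ρ j 0 x - ρ j 1 x).re ≤ (score M (Apure n ψ)).re := by
  obtain ⟨z, hz, hle⟩ := exists_forall_mem_le_of_convexOn_update
    (F := fun y => (score M (Function.curry y)).re)
    (fun y p => (isAffineFun_score_curry_update M y p).convexOn_re.subset (Set.subset_univ _)
      (convex_convexHull ℝ _))
    (x := fun p => ρ p.1 0 p.2 - ρ p.1 1 p.2)
    (fun p => sub_mem_convexHull_antipodalObs (hρ _ _ _) (hρ _ _ _) (hρtr _ _ _) (hρtr _ _ _))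
  choose φ hφ hzφ using hz
  refine ⟨fun j a x => φ (j, x) a, fun j x => hφ (j, x), ?_⟩
  have hz : Apure n (fun j a x => φ (j, x) a) = Function.curry z :=
    funext fun j => funext fun x => hzφ (j, x)
  rwa [hz]

theorem stmt19_general (n : ℕ) [NeZero n]
    (M : (Fin n → Fin 2) → Matrix (Fin n → Fin 2) (Fin n → Fin 2) ℂ)
    (hMpsd : ∀ s, (M s).PosSemidef)
    (ρ : Fin n → Fin 2 → Fin 2 → Mat2)
    (hρpsd : ∀ j a x, (ρ j a x).PosSemidef)
    (hρtr : ∀ j a x, (ρ j a x).trace = 1) :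
    (∃ ψ : Fin n → Fin 2 → Fin 2 → (Fin 2 → ℂ),
      (∀ j a x, star (ψ j a x) ⬝ᵥ ψ j a x = 1) ∧
      (∀ j x, star (ψ j 0 x) ⬝ᵥ ψ j 1 x = 0) ∧
      ∑ s, (M s * Wop n (fun j x => ρ j 0 x - ρ j 1 x) s).trace
        ≤ ∑ s, (M s * Wop n (Apure n ψ) s).trace)
    ∧ (∃ ψ : Fin n → Fin 2 → Fin 2 → (Fin 2 → ℂ),
      (∀ j a x, star (ψ j a x) ⬝ᵥ ψ j a x = 1) ∧
      (∀ j x, star (ψ j 0 x) ⬝ᵥ ψ j 1 x = 0) ∧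
      ∀ ρ' : Fin n → Fin 2 → Fin 2 → Mat2,
        (∀ j a x, (ρ' j a x).PosSemidef) → (∀ j a x, (ρ' j a x).trace = 1) →
        ∑ s, (M s * Wop n (fun j x => ρ' j 0 x - ρ' j 1 x) s).trace
          ≤ ∑ s, (M s * Wop n (Apure n ψ) s).trace) := by
  have hM : ∀ s, (M s).IsHermitian := fun s => (hMpsd s).1
  obtain ⟨ψmax, hψmax, hmax⟩ := exists_isMaxOn_re_score_Apure M
  refine ⟨?_, ψmax, fun j a x => (hψmax j x).1 a, fun j x => (hψmax j x).2, fun ρ' hρ' hρ'tr => ?_⟩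
  · obtain ⟨ψ, hψ, hle⟩ := exists_mem_antipodalFamilies_re_score_le M hρpsd hρtr
    exact ⟨ψ, fun j a x => (hψ j x).1 a, fun j x => (hψ j x).2,
      score_sub_le_score_Apure_of_re_le hM hρpsd hle⟩
  · obtain ⟨ψ, hψ, hle⟩ := exists_mem_antipodalFamilies_re_score_le M hρ' hρ'tr
    exact score_sub_le_score_Apure_of_re_le hM hρ' (hle.trans (hmax hψ))

/-- Appendix B antipodality lemma: for any POVM and any
density-matrix messages, antipodal (pure and orthogonal) messages do at least
as well; consequently, for a fixed POVM the success metric is maximized by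
pure antipodal messages. -/
theorem stmt19 (n : ℕ) [NeZero n] (hn : 2 ≤ n)
    (M : (Fin n → Fin 2) → Matrix (Fin n → Fin 2) (Fin n → Fin 2) ℂ)
    (hMpsd : ∀ s, (M s).PosSemidef)
    (hMsum : ∑ s, M s = 1)
    (ρ : Fin n → Fin 2 → Fin 2 → Mat2)
    (hρpsd : ∀ j a x, (ρ j a x).PosSemidef)
    (hρtr : ∀ j a x, (ρ j a x).trace = 1) :
    (∃ ψ : Fin n → Fin 2 → Fin 2 → (Fin 2 → ℂ),
      (∀ j a x, star (ψ j a x) ⬝ᵥ ψ j a x = 1) ∧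
      (∀ j x, star (ψ j 0 x) ⬝ᵥ ψ j 1 x = 0) ∧
      ∑ s, (M s * Wop n (fun j x => ρ j 0 x - ρ j 1 x) s).trace
        ≤ ∑ s, (M s * Wop n (Apure n ψ) s).trace)
    ∧ (∃ ψ : Fin n → Fin 2 → Fin 2 → (Fin 2 → ℂ),
      (∀ j a x, star (ψ j a x) ⬝ᵥ ψ j a x = 1) ∧
      (∀ j x, star (ψ j 0 x) ⬝ᵥ ψ j 1 x = 0) ∧
      ∀ ρ' : Fin n → Fin 2 → Fin 2 → Mat2,
        (∀ j a x, (ρ' j a x).PosSemidef) → (∀ j a x, (ρ' j a x).trace = 1) →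
        ∑ s, (M s * Wop n (fun j x => ρ' j 0 x - ρ' j 1 x) s).trace
          ≤ ∑ s, (M s * Wop n (Apure n ψ) s).trace) :=
  stmt19_general n M hMpsd ρ hρpsd hρtr
end
end
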